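/- Let G be an AH-algebra. Then the set Ω of states on G is order determining: for all g,h ∈ G, g ≤ h if and only if ω(g) ≤ ω(h) for every state ω ∈ Ω. -/

import Mathlib

/-- An e-ring `(R,E)`: an associative ring `R` with unity together with a set `E ⊆ R`
of effects, satisfying the Foulis axioms.  `E⁺` is realized as the additive submonoid
closure of `E` (the set of all finite sums of effects). -/
structure ERing (R : Type*) [Ring R] where
  E : Set R
  zero_mem : (0 : R) ∈ E
  one_mem : (1 : R) ∈ E
  compl_mem : ∀ e ∈ E, 1 - e ∈ E
  epos_i : ∀ a ∈ AddSubmonoid.closure E, -a ∈ AddSubmonoid.closure E → a = 0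
  epos_ii : ∀ a ∈ AddSubmonoid.closure E, 1 - a ∈ AddSubmonoid.closure E → a ∈ E
  epos_iii : ∀ a ∈ AddSubmonoid.closure E, ∀ b ∈ AddSubmonoid.closure E,
    a * b = b * a → a * b ∈ AddSubmonoid.closure E
  epos_iv : ∀ a ∈ AddSubmonoid.closure E, ∀ b ∈ AddSubmonoid.closure E,
    a * b * a ∈ AddSubmonoid.closure E
  epos_v : ∀ a ∈ AddSubmonoid.closure E, ∀ b ∈ AddSubmonoid.closure E,
    a * b * a = 0 → a * b = 0 ∧ b * a = 0
  epos_vi : ∀ a ∈ AddSubmonoid.closure E, ∀ b ∈ AddSubmonoid.closure E,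
    (a - b) ^ 2 ∈ AddSubmonoid.closure E
  zero_ne_one : (0 : R) ≠ 1

namespace ERing

variable {R : Type*} [Ring R] (er : ERing R)

/-- `E⁺`, the set of all finite sums of effects; the positive cone of the directed group. -/
def Epos : Set R := (AddSubmonoid.closure er.E : Set R)

/-- The directed group `G = E⁺ - E⁺` of the e-ring. -/
def G : Set R := {g | ∃ a ∈ er.Epos, ∃ b ∈ er.Epos, g = a - b}

/-- The partial order on the directed group: `g ≤ h` iff `h - g ∈ E⁺`. -/
def le (g h : R) : Prop := h - g ∈ er.Epos

/-- The set of projections `P = {p ∈ G : p = p²}`. -/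
def P : Set R := {p | p ∈ er.G ∧ p = p ^ 2}

/-- The commutant in `G` of a subset `A ⊆ G`. -/
def commutant (A : Set R) : Set R := {g | g ∈ er.G ∧ ∀ a ∈ A, g * a = a * g}

/-- The bicommutant in `G` of a subset `A ⊆ G`. -/
def CC (A : Set R) : Set R := er.commutant (er.commutant A)

/-- `s` is the supremum of `A` within the subset `S` (w.r.t. the e-ring order). -/
def IsSupIn (S A : Set R) (s : R) : Prop :=
  s ∈ S ∧ (∀ a ∈ A, er.le a s) ∧ ∀ b ∈ S, (∀ a ∈ A, er.le a b) → er.le s b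

/-- `s` is the infimum of `A` within the subset `S` (w.r.t. the e-ring order). -/
def IsInfIn (S A : Set R) (s : R) : Prop :=
  s ∈ S ∧ (∀ a ∈ A, er.le s a) ∧ ∀ b ∈ S, (∀ a ∈ A, er.le b a) → er.le b s

/-- Quadratic annihilation property. -/
def HasQA : Prop := ∀ g ∈ er.G, ∀ h ∈ er.G, g * h ^ 2 * g = 0 → g * h = 0 ∧ h * g = 0

/-- Commutative Vigier property: every ascending sequence of pairwise commuting elements
of `G` bounded above in `G` has a supremum in `G` which double commutes with the sequence. -/
def HasCV : Prop :=
  ∀ g : ℕ → R, (∀ n, g n ∈ er.G) → (∀ n, er.le (g n) (g (n + 1))) →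
    (∀ m n, g m * g n = g n * g m) → (∃ b ∈ er.G, ∀ n, er.le (g n) b) →
    ∃ s, er.IsSupIn er.G (Set.range g) s ∧ s ∈ er.CC (Set.range g)

/-- `G` is an abstract Hermitian (AH) algebra: there is a semitransparent effect `½`,
`G` has quadratic annihilation, and `G` has the commutative Vigier property. -/
def IsAH : Prop := (∃ h ∈ er.E, h + h = 1) ∧ er.HasQA ∧ er.HasCV

end ERing

namespace ERing

variable {R : Type*} [Ring R] (er : ERing R)

/-- A state on `G`: an order-preserving additive map `ω : G → ℝ` with `ω(1) = 1`. -/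
def IsState (f : R → ℝ) : Prop :=
  (∀ g ∈ er.G, ∀ h ∈ er.G, f (g + h) = f g + f h) ∧
  (∀ g ∈ er.G, ∀ h ∈ er.G, er.le g h → f g ≤ f h) ∧ f 1 = 1

end ERing

/-! The gauge `p x = inf {m / n : n • x ≤ m • 1}` of the order unit `1` of `G` is subadditive and
`ℕ`-homogeneous, so a Hahn–Banach argument for abelian groups (Zorn's lemma applied to the
subgroups of `G × ℝ` lying below the graph of `p`) gives, for every `x`, a state `ω ≤ p` with
`ω x = p x`. Hence if all states are nonnegative at `x`, then `p (-x) ≤ 0`, i.e.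
`m • 1 + n • x ≥ 0` for some `n > 0` with `m / n` arbitrarily small. The effect `½` and the commutative Vigier
property make `G` Archimedean and unperforated, which turns this into `x ≥ 0`. -/

namespace AddSubgroup

variable {A : Type*} [AddCommGroup A]

def IsDominatedBy (Γ : AddSubgroup (A × ℝ)) (p : A → ℝ) : Prop := ∀ z ∈ Γ, z.2 ≤ p z.1

theorem exists_addMonoidHom_graph {B : Type*} [AddCommGroup B] (Γ : AddSubgroup (A × B))
    (htotal : ∀ x, ∃ y, (x, y) ∈ Γ) (hzero : ∀ y, ((0 : A), y) ∈ Γ → y = 0) :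
    ∃ f : A →+ B, ∀ x, (x, f x) ∈ Γ := by
  choose f hf using htotal
  refine ⟨AddMonoidHom.mk' f fun x y => ?_, hf⟩
  have h := sub_mem (hf (x + y)) (add_mem (hf x) (hf y))
  rw [Prod.mk_add_mk, Prod.mk_sub_mk, sub_self] at h
  exact sub_eq_zero.mp (hzero _ h)

variable {p : A → ℝ}

theorem isDominatedBy_zmultiples (hadd : ∀ x y, p (x + y) ≤ p x + p y)
    (hsmul : ∀ (n : ℕ) x, p (n • x) = n * p x) (x₀ : A) :
    (zmultiples (x₀, p x₀)).IsDominatedBy p := by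
  rintro _ ⟨m, rfl⟩
  simp only [Prod.smul_fst, Prod.smul_snd, zsmul_eq_mul]
  obtain ⟨n, rfl | rfl⟩ := Int.eq_nat_or_neg m
  · rw [natCast_zsmul, hsmul]
    simp
  · have h := hadd (n • x₀) (-(n • x₀))
    rw [add_neg_cancel, hsmul, show p 0 = 0 by simpa using hsmul 0 0] at h
    rw [neg_smul, natCast_zsmul]
    push_cast
    linarith

theorem IsDominatedBy.sub_div_le_div_sub (hadd : ∀ x y, p (x + y) ≤ p x + p y)
    (hsmul : ∀ (n : ℕ) x, p (n • x) = n * p x) {Γ : AddSubgroup (A × ℝ)}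
    (hΓ : Γ.IsDominatedBy p) (x : A) {w z : A × ℝ} (hw : w ∈ Γ) (hz : z ∈ Γ) {k n : ℕ}
    (hk : 0 < k) (hn : 0 < n) :
    (w.2 - p (w.1 - k • x)) / k ≤ (p (z.1 + n • x) - z.2) / n := by
  have h := hΓ _ (add_mem (nsmul_mem hw n) (nsmul_mem hz k))
  simp only [Prod.fst_add, Prod.snd_add, Prod.smul_fst, Prod.smul_snd, nsmul_eq_mul] at h
  have hsplit : n • w.1 + k • z.1 = n • (w.1 - k • x) + k • (z.1 + n • x) := by module
  rw [hsplit] at h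
  have h' := h.trans (hadd _ _)
  rw [hsmul, hsmul] at h'
  rw [div_le_div_iff₀ (by positivity) (by positivity)]
  nlinarith

theorem IsDominatedBy.exists_sup_zmultiples (hadd : ∀ x y, p (x + y) ≤ p x + p y)
    (hsmul : ∀ (n : ℕ) x, p (n • x) = n * p x) {Γ : AddSubgroup (A × ℝ)}
    (hΓ : Γ.IsDominatedBy p) (x : A) :
    ∃ c : ℝ, (Γ ⊔ zmultiples (x, c)).IsDominatedBy p := by
  set lower : Set ℝ := {s | ∃ w ∈ Γ, ∃ k : ℕ, 0 < k ∧ s = (w.2 - p (w.1 - k • x)) / k}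
  set upper : Set ℝ := {t | ∃ z ∈ Γ, ∃ n : ℕ, 0 < n ∧ t = (p (z.1 + n • x) - z.2) / n}
  have hcross : ∀ s ∈ lower, ∀ t ∈ upper, s ≤ t := by
    rintro _ ⟨w, hw, k, hk, rfl⟩ _ ⟨z, hz, n, hn, rfl⟩
    exact hΓ.sub_div_le_div_sub hadd hsmul x hw hz hk hn
  obtain ⟨t₀, ht₀⟩ : upper.Nonempty := ⟨_, 0, Γ.zero_mem, 1, one_pos, rfl⟩
  have hlower : ∀ s ∈ lower, s ≤ sSup lower := fun s hs =>
    le_csSup ⟨t₀, fun s hs => hcross s hs t₀ ht₀⟩ hs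
  have hupper : ∀ t ∈ upper, sSup lower ≤ t := fun t ht =>
    csSup_le ⟨_, 0, Γ.zero_mem, 1, one_pos, rfl⟩ fun s hs => hcross s hs t ht
  refine ⟨sSup lower, fun _ hmem => ?_⟩
  obtain ⟨z, hz, _, hm, rfl⟩ := mem_sup.mp hmem
  obtain ⟨m, rfl⟩ := mem_zmultiples_iff.mp hm
  simp only [Prod.fst_add, Prod.snd_add, Prod.smul_fst, Prod.smul_snd, zsmul_eq_mul]
  obtain ⟨n, rfl | rfl⟩ := Int.eq_nat_or_neg m
  · rcases Nat.eq_zero_or_pos n with rfl | hn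
    · simpa using hΓ z hz
    have h := hupper _ ⟨z, hz, n, hn, rfl⟩
    rw [le_div_iff₀ (by positivity)] at h
    push_cast
    rw [natCast_zsmul]
    linarith
  · rcases Nat.eq_zero_or_pos n with rfl | hn
    · simpa using hΓ z hz
    have h := hlower _ ⟨z, hz, n, hn, rfl⟩
    rw [div_le_iff₀ (by positivity)] at h
    push_cast
    rw [neg_smul, natCast_zsmul, ← sub_eq_add_neg]
    linarith

end AddSubgroup

open AddSubgroup in
theorem exists_addMonoidHom_le_of_sublinear {A : Type*} [AddCommGroup A] {p : A → ℝ}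
    (hadd : ∀ x y, p (x + y) ≤ p x + p y) (hsmul : ∀ (n : ℕ) x, p (n • x) = n * p x) (x₀ : A) :
    ∃ f : A →+ ℝ, (∀ x, f x ≤ p x) ∧ f x₀ = p x₀ := by
  obtain ⟨Γ, hΓ₀, hΓ, hmax⟩ := zorn_le_nonempty₀ {Γ : AddSubgroup (A × ℝ) | Γ.IsDominatedBy p}
    (fun c hc hchain Γ hΓ => ⟨sSup c, fun z hz => by
      obtain ⟨Γ', hΓ', hz⟩ := (mem_sSup_of_directedOn ⟨Γ, hΓ⟩ hchain.directedOn).mp hz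
      exact hc hΓ' z hz, fun _ => le_sSup⟩)
    _ (isDominatedBy_zmultiples hadd hsmul x₀)
  have htotal : ∀ x, ∃ r, (x, r) ∈ Γ := fun x => by
    obtain ⟨c, hc⟩ := hΓ.exists_sup_zmultiples hadd hsmul x
    exact ⟨c, hmax hc le_sup_left (mem_sup_right (mem_zmultiples _))⟩
  have hp0 : p 0 = 0 := by simpa using hsmul 0 0
  have huniq : ∀ r, ((0 : A), r) ∈ Γ → r = 0 := fun r hr =>
    le_antisymm (hp0 ▸ hΓ _ hr) (by simpa [hp0] using hΓ _ (neg_mem hr))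
  obtain ⟨f, hf⟩ := exists_addMonoidHom_graph Γ htotal huniq
  refine ⟨f, fun x => hΓ _ (hf x), sub_eq_zero.mp (huniq _ ?_)⟩
  simpa using sub_mem (hf x₀) (hΓ₀ (mem_zmultiples _))

namespace AddSubmonoid

variable {A : Type*} [AddCommGroup A]

/-- Besides the usual order-unit axiom, a nondegeneracy condition: no negative multiple of `e`
lies in `C`. -/
structure IsOrderUnit (C : AddSubmonoid A) (e : A) : Prop where
  exists_nsmul_sub_mem : ∀ x, ∃ n : ℕ, n • e - x ∈ C
  nonneg_of_zsmul_mem : ∀ m : ℤ, m • e ∈ C → 0 ≤ m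

noncomputable def unitGauge (C : AddSubmonoid A) (e x : A) : ℝ :=
  sInf {q | ∃ (m : ℤ) (n : ℕ), 0 < n ∧ m • e - n • x ∈ C ∧ q = m / n}

variable {C : AddSubmonoid A} {e : A}

theorem IsOrderUnit.unitGauge_le (he : C.IsOrderUnit e) {x : A} {m : ℤ} {n : ℕ} (hn : 0 < n)
    (hmem : m • e - n • x ∈ C) : C.unitGauge e x ≤ m / n := by
  refine csInf_le ?_ ⟨m, n, hn, hmem, rfl⟩
  obtain ⟨N, hN⟩ := he.exists_nsmul_sub_mem (-x)
  refine ⟨-N, ?_⟩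
  rintro _ ⟨m', n', hn', hmem', rfl⟩
  have h := he.nonneg_of_zsmul_mem (m' + n' * N) <| by
    convert add_mem hmem' (nsmul_mem hN n') using 1
    module
  rw [le_div_iff₀ (by positivity)]
  have : (0 : ℝ) ≤ m' + n' * N := by exact_mod_cast h
  linarith

theorem IsOrderUnit.le_unitGauge (he : C.IsOrderUnit e) {x : A} {c : ℝ}
    (h : ∀ (m : ℤ) (n : ℕ), 0 < n → m • e - n • x ∈ C → c ≤ m / n) : c ≤ C.unitGauge e x := by
  obtain ⟨N, hN⟩ := he.exists_nsmul_sub_mem x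
  exact le_csInf ⟨N, N, 1, one_pos, by simpa using hN, by simp⟩
    (by rintro _ ⟨m, n, hn, hmem, rfl⟩; exact h m n hn hmem)

theorem IsOrderUnit.unitGauge_add_le (he : C.IsOrderUnit e) (x y : A) :
    C.unitGauge e (x + y) ≤ C.unitGauge e x + C.unitGauge e y := by
  suffices h : ∀ (m : ℤ) (n : ℕ), 0 < n → m • e - n • x ∈ C →
      ∀ (m' : ℤ) (n' : ℕ), 0 < n' → m' • e - n' • y ∈ C →
      C.unitGauge e (x + y) ≤ m / n + m' / n' by
    have hx : ∀ (m : ℤ) (n : ℕ), 0 < n → m • e - n • x ∈ C →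
        C.unitGauge e (x + y) - m / n ≤ C.unitGauge e y := fun m n hn hmem =>
      he.le_unitGauge fun m' n' hn' hmem' => by linarith [h m n hn hmem m' n' hn' hmem']
    linarith [he.le_unitGauge (x := x) (c := C.unitGauge e (x + y) - C.unitGauge e y)
      fun m n hn hmem => by linarith [hx m n hn hmem]]
  intro m n hn hmem m' n' hn' hmem'
  have h := he.unitGauge_le (x := x + y) (m := m * n' + m' * n) (Nat.mul_pos hn hn') <| by
    convert add_mem (nsmul_mem hmem n') (nsmul_mem hmem' n) using 1
    module
  convert h using 1
  push_cast
  field_simp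

theorem IsOrderUnit.unitGauge_zero (he : C.IsOrderUnit e) : C.unitGauge e 0 = 0 := by
  refine le_antisymm (by simpa using he.unitGauge_le (x := 0) (m := 0) one_pos (by simp)) ?_
  refine he.le_unitGauge fun m n _ hmem => ?_
  have : (0 : ℝ) ≤ m := by exact_mod_cast he.nonneg_of_zsmul_mem m (by simpa using hmem)
  positivity

theorem IsOrderUnit.unitGauge_nsmul (he : C.IsOrderUnit e) (k : ℕ) (x : A) :
    C.unitGauge e (k • x) = k * C.unitGauge e x := by
  rcases Nat.eq_zero_or_pos k with rfl | hk
  · simpa using he.unitGauge_zero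
  have hk' : (0 : ℝ) < k := by exact_mod_cast hk
  refine le_antisymm ?_ ?_
  · rw [← div_le_iff₀' hk']
    refine he.le_unitGauge fun m n hn hmem => ?_
    have h := he.unitGauge_le (x := k • x) (m := k * m) hn <| by
      convert nsmul_mem hmem k using 1
      module
    rw [div_le_iff₀' hk', ← mul_div_assoc]
    exact_mod_cast h
  · refine he.le_unitGauge fun m n hn hmem => ?_
    have h := he.unitGauge_le (x := x) (m := m) (Nat.mul_pos hn hk) <| by
      convert hmem using 1
      module
    rw [Nat.cast_mul, ← div_div, le_div_iff₀ hk'] at h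
    linarith

theorem IsOrderUnit.exists_nonneg_addMonoidHom_eq_unitGauge (he : C.IsOrderUnit e) (x₀ : A) :
    ∃ f : A →+ ℝ, (∀ c ∈ C, 0 ≤ f c) ∧ f e = 1 ∧ f x₀ = C.unitGauge e x₀ := by
  obtain ⟨f, hle, hx₀⟩ :=
    exists_addMonoidHom_le_of_sublinear he.unitGauge_add_le he.unitGauge_nsmul x₀
  refine ⟨f, fun c hc => ?_, le_antisymm ?_ ?_, hx₀⟩
  · have h := (hle (-c)).trans (he.unitGauge_le (m := 0) one_pos (by simpa using hc))
    simp only [map_neg, Int.cast_zero, zero_div] at h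
    linarith
  · simpa using (hle e).trans (he.unitGauge_le (m := 1) one_pos (by simp))
  · have h := (hle (-e)).trans (he.unitGauge_le (m := -1) one_pos (by simp))
    norm_num at h
    linarith

theorem IsOrderUnit.exists_ratio_lt_of_forall_nonneg (he : C.IsOrderUnit e) {x : A}
    (hx : ∀ f : A →+ ℝ, (∀ c ∈ C, 0 ≤ f c) → f e = 1 → 0 ≤ f x) {ε : ℝ} (hε : 0 < ε) :
    ∃ (m : ℤ) (n : ℕ), 0 < n ∧ (m : ℝ) / n < ε ∧ m • e + n • x ∈ C := by
  obtain ⟨f, hpos, hfe, hfx⟩ := he.exists_nonneg_addMonoidHom_eq_unitGauge (-x)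
  have hlt : C.unitGauge e (-x) < ε := by linarith [hx f hpos hfe, map_neg f x]
  obtain ⟨N, hN⟩ := he.exists_nsmul_sub_mem (-x)
  obtain ⟨_, ⟨m, n, hn, hmem, rfl⟩, hlt⟩ :=
    exists_lt_of_csInf_lt (by exact ⟨_, N, 1, one_pos, by simpa using hN, rfl⟩) hlt
  exact ⟨m, n, hn, hlt, by simpa using hmem⟩

end AddSubmonoid

theorem commute_of_add_self_eq_one {R : Type*} [Ring R] {u : R} (hu : u + u = 1) (x : R) :
    Commute u x := by
  have htwo : ∀ y : R, y + y = 0 → y = 0 := fun y hy => by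
    rw [← one_mul y, ← hu, add_mul, ← mul_add, hy, mul_zero]
  refine sub_eq_zero.mp (htwo _ ?_)
  rw [sub_add_sub_comm, ← add_mul, ← mul_add, hu, one_mul, mul_one, sub_self]

theorem two_pow_nsmul_pow_of_add_self_eq_one {R : Type*} [Ring R] {u : R} (hu : u + u = 1)
    (j : ℕ) : 2 ^ j • u ^ j = 1 := by
  induction j with
  | zero => simp
  | succ j ih => rw [pow_succ, mul_nsmul', pow_succ, two_nsmul, ← mul_add, hu, mul_one, ih]

namespace ERing

variable {R : Type*} [Ring R] (er : ERing R)

@[simp]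
theorem mem_Epos {x : R} : x ∈ er.Epos ↔ x ∈ AddSubmonoid.closure er.E := Iff.rfl

theorem one_mem_Epos : (1 : R) ∈ er.Epos := AddSubmonoid.subset_closure er.one_mem

theorem Epos_subset_G : er.Epos ⊆ er.G := fun x hx =>
  ⟨x, hx, 0, AddSubmonoid.zero_mem _, (sub_zero x).symm⟩

def directedGroup : AddSubgroup R where
  carrier := er.G
  add_mem' := by
    rintro _ _ ⟨a, ha, b, hb, rfl⟩ ⟨c, hc, d, hd, rfl⟩
    exact ⟨a + c, add_mem ha hc, b + d, add_mem hb hd, by abel⟩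
  zero_mem' := er.Epos_subset_G (AddSubmonoid.zero_mem _)
  neg_mem' := by
    rintro _ ⟨a, ha, b, hb, rfl⟩
    exact ⟨b, hb, a, ha, by abel⟩

theorem exists_nsmul_one_sub_mem_Epos {x : R} (hx : x ∈ er.G) :
    ∃ n : ℕ, n • (1 : R) - x ∈ er.Epos := by
  obtain ⟨a, ha, b, hb, rfl⟩ := hx
  suffices ∃ n : ℕ, n • (1 : R) - a ∈ er.Epos by
    obtain ⟨n, hn⟩ := this
    exact ⟨n, by simpa [sub_sub_eq_add_sub, add_sub_right_comm] using add_mem hn hb⟩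
  induction ha using AddSubmonoid.closure_induction with
  | mem e he => exact ⟨1, by simpa using AddSubmonoid.subset_closure (er.compl_mem e he)⟩
  | zero => exact ⟨0, by simp⟩
  | add x y _ _ hx hy =>
    obtain ⟨n, hn⟩ := hx
    obtain ⟨k, hk⟩ := hy
    exact ⟨n + k, by rw [mem_Epos]; convert add_mem hn hk using 1; module⟩

theorem nonneg_of_zsmul_one_mem_Epos {m : ℤ} (hm : m • (1 : R) ∈ er.Epos) : 0 ≤ m := by
  by_contra hneg
  obtain ⟨k, rfl⟩ : ∃ k : ℕ, m = -(k + 1) := ⟨(-m - 1).toNat, by omega⟩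
  have h : -1 ∈ er.Epos := by
    rw [mem_Epos]
    convert add_mem hm (nsmul_mem er.one_mem_Epos k) using 1
    module
  exact er.zero_ne_one (er.epos_i 1 er.one_mem_Epos h).symm

def positiveCone : AddSubmonoid er.directedGroup :=
  (AddSubmonoid.closure er.E).comap er.directedGroup.subtype

def orderUnit : er.directedGroup := ⟨1, er.Epos_subset_G er.one_mem_Epos⟩

theorem isOrderUnit_orderUnit : er.positiveCone.IsOrderUnit er.orderUnit where
  exists_nsmul_sub_mem x := by
    simpa [positiveCone, orderUnit] using er.exists_nsmul_one_sub_mem_Epos x.2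
  nonneg_of_zsmul_mem _ hm :=
    er.nonneg_of_zsmul_one_mem_Epos (by simpa [positiveCone, orderUnit] using hm)

theorem isState_extend (φ : er.directedGroup →+ ℝ) (hpos : ∀ c ∈ er.positiveCone, 0 ≤ φ c)
    (hunit : φ er.orderUnit = 1) : er.IsState (Function.extend Subtype.val φ 0) := by
  have hext : ∀ x : er.directedGroup, Function.extend Subtype.val φ 0 x = φ x :=
    Subtype.val_injective.extend_apply φ 0
  refine ⟨fun g hg h hh => ?_, fun g hg h hh hgh => ?_, hunit ▸ hext er.orderUnit⟩
  · lift g to er.directedGroup using hg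
    lift h to er.directedGroup using hh
    rw [← AddSubgroup.coe_add, hext, hext, hext, map_add]
  · lift g to er.directedGroup using hg
    lift h to er.directedGroup using hh
    have := hpos (h - g) (by simpa [positiveCone, ERing.le] using hgh)
    rw [hext, hext]
    linarith [map_sub φ h g]

variable {er} {u : R}

theorem mul_mem_Epos_of_add_self_eq_one (hu : u ∈ er.E) (hu2 : u + u = 1) {a : R}
    (ha : a ∈ er.Epos) : u * a ∈ er.Epos := by
  have h := er.epos_iv u (AddSubmonoid.subset_closure hu) a ha
  rw [← mul_one (u * a), ← hu2, mul_add]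
  exact add_mem h h

theorem pow_mul_mem_Epos_of_add_self_eq_one (hu : u ∈ er.E) (hu2 : u + u = 1) (j : ℕ) {a : R}
    (ha : a ∈ er.Epos) : u ^ j * a ∈ er.Epos := by
  induction j with
  | zero => simpa using ha
  | succ j ih =>
    rw [pow_succ', mul_assoc]
    exact mul_mem_Epos_of_add_self_eq_one hu hu2 ih

/-- The supremum `s` of the increasing sequence `-(u ^ t * a)` satisfies `s ≤ s + s`, because
`s + s` is again an upper bound; so `0 ≤ s ≤ x`. -/
theorem mem_Epos_of_forall_add_pow_mul_mem (hu : u ∈ er.E) (hu2 : u + u = 1) (hCV : er.HasCV)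
    {a x : R} (ha : a ∈ er.Epos) (hx : x ∈ er.G) (h : ∀ t : ℕ, x + u ^ t * a ∈ er.Epos) :
    x ∈ er.Epos := by
  have hpos (t : ℕ) : u ^ t * a ∈ er.Epos := pow_mul_mem_Epos_of_add_self_eq_one hu hu2 t ha
  have hhalve (t : ℕ) : u ^ t * a = u ^ (t + 1) * a + u ^ (t + 1) * a := by
    rw [← add_mul, pow_succ, ← mul_add, hu2, mul_one]
  have hcomm : ∀ y, Commute u y := commute_of_add_self_eq_one hu2
  obtain ⟨s, ⟨hsG, hub, hleast⟩, -⟩ := hCV (fun t => -(u ^ t * a))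
    (fun t => er.directedGroup.neg_mem (er.Epos_subset_G (hpos t)))
    (fun t => by simpa [ERing.le, hhalve t, add_comm] using hpos (t + 1))
    (fun s t => (((hcomm _).pow_left s).mul_left
      (((hcomm a).pow_left t).symm.mul_right (Commute.refl a))).neg_left.neg_right)
    ⟨x, hx, fun t => by simpa [ERing.le] using h t⟩
  have hub' (t : ℕ) : s + u ^ t * a ∈ er.Epos := by simpa [ERing.le] using hub _ ⟨t, rfl⟩
  have hs : er.le s (s + s) := hleast _ (er.directedGroup.add_mem hsG hsG) <| by
    rintro _ ⟨t, rfl⟩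
    simpa [ERing.le, hhalve t, add_add_add_comm, sub_eq_add_neg]
      using add_mem (hub' (t + 1)) (hub' (t + 1))
  have hxs : er.le s x := hleast x hx <| by
    rintro _ ⟨t, rfl⟩
    simpa [ERing.le] using h t
  simpa [ERing.le] using add_mem hxs hs

/-- Writing `2 ^ t = n * q + r` with `r < n` gives `2 ^ t • y + (n * M) • 1 ≥ 0` whenever
`M • 1 + y ≥ 0`; multiplying by `u ^ t` yields `y + u ^ t * ((n * M) • 1) ≥ 0` for all `t`. -/
theorem mem_Epos_of_nsmul_mem (hu : u ∈ er.E) (hu2 : u + u = 1) (hCV : er.HasCV) {n : ℕ}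
    (hn : 0 < n) {y : R} (hy : y ∈ er.G) (h : n • y ∈ er.Epos) : y ∈ er.Epos := by
  obtain ⟨M, hM⟩ := er.exists_nsmul_one_sub_mem_Epos (er.directedGroup.neg_mem hy)
  rw [sub_neg_eq_add] at hM
  refine mem_Epos_of_forall_add_pow_mul_mem hu hu2 hCV (nsmul_mem er.one_mem_Epos (n * M)) hy
    fun t => ?_
  obtain ⟨q, r, hr, hdiv⟩ : ∃ q r, r < n ∧ n * q + r = 2 ^ t :=
    ⟨_, _, Nat.mod_lt _ hn, Nat.div_add_mod _ _⟩
  have hsum : 2 ^ t • y + (n * M) • (1 : R) ∈ er.Epos := by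
    obtain ⟨d, rfl⟩ := Nat.exists_eq_add_of_lt hr
    rw [mem_Epos, ← hdiv]
    convert add_mem (add_mem (nsmul_mem h q) (nsmul_mem hM r))
      (nsmul_mem er.one_mem_Epos ((d + 1) * M)) using 1
    module
  have hhalf := pow_mul_mem_Epos_of_add_self_eq_one hu hu2 t hsum
  rwa [mul_add, mul_smul_comm, ← smul_mul_assoc, two_pow_nsmul_pow_of_add_self_eq_one hu2,
    one_mul] at hhalf

theorem mem_Epos_of_forall_ratio_lt (hu : u ∈ er.E) (hu2 : u + u = 1) (hCV : er.HasCV) {x : R}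
    (hx : x ∈ er.G) (h : ∀ ε > 0, ∃ (m : ℤ) (n : ℕ),
      0 < n ∧ (m : ℝ) / n < ε ∧ m • (1 : R) + n • x ∈ er.Epos) : x ∈ er.Epos := by
  refine mem_Epos_of_forall_add_pow_mul_mem hu hu2 hCV er.one_mem_Epos hx fun j => ?_
  obtain ⟨m, n, hn, hlt, hmem⟩ := h (1 / 2 ^ j) (by positivity)
  rw [div_lt_div_iff₀ (by positivity) (by positivity), one_mul] at hlt
  have hlt' : m * 2 ^ j < n := by exact_mod_cast hlt
  obtain ⟨d, hd⟩ : ∃ d : ℕ, (n : ℤ) = m * 2 ^ j + d := ⟨(n - m * 2 ^ j).toNat, by omega⟩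
  have hpow : u ^ j ∈ er.Epos := by
    simpa using pow_mul_mem_Epos_of_add_self_eq_one hu hu2 j er.one_mem_Epos
  rw [mul_one]
  refine mem_Epos_of_nsmul_mem hu hu2 hCV hn
    (er.directedGroup.add_mem hx (er.Epos_subset_G hpow)) ?_
  rw [mem_Epos]
  convert add_mem hmem (nsmul_mem hpow d) using 1
  rw [← two_pow_nsmul_pow_of_add_self_eq_one hu2 j]
  linear_combination (norm := module) hd • u ^ j

end ERing

/-- In an AH-algebra, the states are order determining: for
`g, h ∈ G`, `g ≤ h` iff `ω(g) ≤ ω(h)` for every state `ω`. -/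
theorem stmt12 {R : Type*} [Ring R] (er : ERing R) (hAH : er.IsAH) :
    ∀ g ∈ er.G, ∀ h ∈ er.G,
      (er.le g h ↔ ∀ f : R → ℝ, er.IsState f → f g ≤ f h) := by
  obtain ⟨⟨u, hu, hu2⟩, -, hCV⟩ := hAH
  intro g hg h hh
  refine ⟨fun hgh f hf => hf.2.1 g hg h hh hgh, fun hstates => ?_⟩
  lift g to er.directedGroup using hg
  lift h to er.directedGroup using hh
  have hnonneg : ∀ φ : er.directedGroup →+ ℝ, (∀ c ∈ er.positiveCone, 0 ≤ φ c) →
      φ er.orderUnit = 1 → 0 ≤ φ (h - g) := fun φ hpos hunit => by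
    have hφ := hstates _ (er.isState_extend φ hpos hunit)
    rw [Subtype.val_injective.extend_apply, Subtype.val_injective.extend_apply] at hφ
    linarith [map_sub φ h g]
  refine ERing.mem_Epos_of_forall_ratio_lt hu hu2 hCV (h - g).2 fun ε hε => ?_
  obtain ⟨m, n, hn, hlt, hmem⟩ :=
    er.isOrderUnit_orderUnit.exists_ratio_lt_of_forall_nonneg hnonneg hε
  exact ⟨m, n, hn, hlt, by simpa [ERing.positiveCone, ERing.orderUnit] using hmem⟩
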